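/- arXiv:1212.4906 — 2 statements merged into one kernel-verified Lean document; each statement's English description precedes it below -/
import Mathlib

section
/- The diagonal entries of the Jacobian of G are ∂G_j/∂a_j = θ̂_j - θ̂_{j-1} - (r(a_j)/q_j)(1 + (a_j - μ(θ̂_j))²/μ'(θ̂_j)) - (r(a_j)/q_{j-1})(1 + (a_j - μ(θ̂_{j-1}))²/μ'(θ̂_{j-1})). -/
/-!
Moving the cut-point `a_j` to `t` changes only the two adjacent cells: the mass of `U_j` changes at
rate `-r(a_j)` and that of `U_{j-1}` at rate `r(a_j)`, while their first moments change at `a_j`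
times those rates. For a cell of mass `q` and moment `m` with `θ = μ⁻¹(m/q)`, the chain rule gives
`θ' = q'(a - μ θ)/(q μ'(θ))`, so `log q + aθ - ψ(θ)` has derivative
`θ + (q'/q)(1 + (a - μ θ)²/μ'(θ))` in `a`, and `G_j` is the difference of two such terms.
-/

open MeasureTheory Set

section CumulativeIntegral

variable {f : ℝ → ℝ}

lemma hasDerivAt_setIntegral_Iic (hf : Continuous f) (hfi : Integrable f) (x : ℝ) :
    HasDerivAt (fun y => ∫ t in Iic y, f t) (f x) x := by
  have hsplit : (fun y => ∫ t in Iic y, f t) =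
      fun y => (∫ t in Iic (0 : ℝ), f t) + ∫ t in (0 : ℝ)..y, f t := funext fun y => by
    rw [← intervalIntegral.integral_Iic_sub_Iic hfi.integrableOn hfi.integrableOn]
    ring
  rw [hsplit]
  exact (intervalIntegral.integral_hasDerivAt_right (hf.intervalIntegrable _ _)
    hf.aestronglyMeasurable.stronglyMeasurableAtFilter hf.continuousAt).const_add _

variable (hf : Continuous f) (hfpos : ∀ x, 0 < f x) (hfi : Integrable f)
include hf hfpos hfi

lemma strictMono_setIntegral_Iic : StrictMono fun y => ∫ t in Iic y, f t :=
  strictMono_of_deriv_pos fun x => by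
    rw [(hasDerivAt_setIntegral_Iic hf hfi x).deriv]
    exact hfpos x

lemma setIntegral_Iic_pos (x : ℝ) : 0 < ∫ t in Iic x, f t :=
  calc (0 : ℝ) ≤ ∫ t in Iic (x - 1), f t :=
        setIntegral_nonneg measurableSet_Iic fun t _ => (hfpos t).le
    _ < ∫ t in Iic x, f t := strictMono_setIntegral_Iic hf hfpos hfi (by linarith)

lemma setIntegral_Iic_lt_integral (x : ℝ) : ∫ t in Iic x, f t < ∫ t, f t :=
  calc ∫ t in Iic x, f t < ∫ t in Iic (x + 1), f t :=
        strictMono_setIntegral_Iic hf hfpos hfi (by linarith)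
    _ ≤ ∫ t, f t := setIntegral_le_integral hfi (.of_forall fun t => (hfpos t).le)

end CumulativeIntegral

lemma hasDerivAt_of_rightInverse_of_deriv_pos {f f' g : ℝ → ℝ}
    (hf : ∀ x, HasDerivAt f (f' x) x) (hf' : ∀ x, 0 < f' x) (hfg : ∀ y, f (g y) = y) (y : ℝ) :
    HasDerivAt g (f' (g y))⁻¹ y := by
  have hmono : StrictMono f := strictMono_of_deriv_pos fun x => (hf x).deriv ▸ hf' x
  have hg_mono : Monotone g := fun y₁ y₂ h => by
    rw [← hmono.le_iff_le, hfg, hfg]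
    exact h
  have hg_surj : Function.Surjective g := fun x => ⟨f x, hmono.injective (hfg (f x))⟩
  exact (hf (g y)).of_local_left_inverse (hg_mono.continuous_of_surjective hg_surj).continuousAt
    (hf' _).ne' (.of_forall hfg)

/-- The moment hypothesis `m' = p q'` says that the cell gains or loses mass at the point `p`. -/
lemma hasDerivAt_log_add_mul_sub_comp_meanInv {ψ μ dμ μinv q m : ℝ → ℝ} {q' p : ℝ}
    (hψ : ∀ θ, HasDerivAt ψ (μ θ) θ) (hμinv : ∀ y, HasDerivAt μinv (dμ (μinv y))⁻¹ y)
    (hinvr : ∀ y, μ (μinv y) = y)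
    (hq : HasDerivAt q q' p) (hm : HasDerivAt m (p * q') p) (hq0 : q p ≠ 0) :
    HasDerivAt (fun t => Real.log (q t) + t * μinv (m t / q t) - ψ (μinv (m t / q t)))
      (μinv (m p / q p) + q' / q p *
        (1 + (p - μ (μinv (m p / q p))) ^ 2 / dμ (μinv (m p / q p)))) p := by
  have hθ : HasDerivAt (fun t => μinv (m t / q t)) _ p := (hμinv _).comp p (hm.div hq hq0)
  refine (((hq.log hq0).add ((hasDerivAt_id' p).mul hθ)).sub ((hψ _).comp p hθ)).congr_deriv ?_
  rw [hinvr]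
  field_simp
  ring

/-- The integral over the cell `U_i = [b_i, b_{i+1})` of a density with cumulative integral `F` and
total integral `total`, the outer cells `U_0` and `U_n` being unbounded. -/
def cellIntegral (n : ℕ) (total : ℝ) (F : ℝ → ℝ) (b : ℕ → ℝ) (i : ℕ) : ℝ :=
  (if i = n then total else F (b (i + 1))) - (if i = 0 then 0 else F (b i))

section CellIntegral

variable {n : ℕ} {total : ℝ} {F : ℝ → ℝ}

lemma cellIntegral_pos (hF : StrictMono F) (hF0 : ∀ x, 0 < F x) (hF1 : ∀ x, F x < total)
    {b : ℕ → ℝ} (hb : ∀ i j, 1 ≤ i → i < j → j ≤ n → b i < b j) {i : ℕ} (hi : i ≤ n) :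
    0 < cellIntegral n total F b i := by
  unfold cellIntegral
  split_ifs
  · linarith [hF0 (b 1), hF1 (b 1)]
  · linarith [hF1 (b i)]
  · linarith [hF0 (b (i + 1))]
  · linarith [hF (hb i (i + 1) (by omega) (by omega) (by omega))]

lemma cellIntegral_setIntegral_Iic_pos {f : ℝ → ℝ} (hf : Continuous f) (hfpos : ∀ x, 0 < f x)
    (hfi : Integrable f) {b : ℕ → ℝ} (hb : ∀ i j, 1 ≤ i → i < j → j ≤ n → b i < b j) {i : ℕ}
    (hi : i ≤ n) : 0 < cellIntegral n (∫ t, f t) (fun x => ∫ t in Iic x, f t) b i :=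
  cellIntegral_pos (strictMono_setIntegral_Iic hf hfpos hfi) (setIntegral_Iic_pos hf hfpos hfi)
    (setIntegral_Iic_lt_integral hf hfpos hfi) hb hi

variable {F' : ℝ} {b : ℕ → ℝ} {j : ℕ}

lemma hasDerivAt_cellIntegral_update_self (hF : HasDerivAt F F' (b j)) (hj : j ≠ 0) :
    HasDerivAt (fun t => cellIntegral n total F (Function.update b j t) j) (-F') (b j) := by
  simp only [cellIntegral, Function.update_of_ne (show j + 1 ≠ j by omega), Function.update_self,
    if_neg hj]
  exact hF.const_sub _

lemma hasDerivAt_cellIntegral_pred_update (hF : HasDerivAt F F' (b j)) (hj : j ≠ 0)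
    (hjn : j - 1 ≠ n) :
    HasDerivAt (fun t => cellIntegral n total F (Function.update b j t) (j - 1)) F' (b j) := by
  simp only [cellIntegral, Nat.sub_add_cancel (Nat.one_le_iff_ne_zero.mpr hj), Function.update_self,
    Function.update_of_ne (show j - 1 ≠ j by omega), if_neg hjn]
  exact hF.sub_const _

end CellIntegral

theorem smml_G_jacobian_diagonal_general
    (n : ℕ)
    (r : ℝ → ℝ) (hr : Continuous r) (hrpos : ∀ x, 0 < r x)
    (hint : Integrable r) (hnorm : ∫ x, r x = 1)
    (hint1 : Integrable (fun x => x * r x))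
    (ψ μ dμ : ℝ → ℝ) (hψ : ∀ θ, HasDerivAt ψ (μ θ) θ)
    (hμ : ∀ θ, HasDerivAt μ (dμ θ) θ) (hdμpos : ∀ θ, 0 < dμ θ)
    (μinv : ℝ → ℝ) (hinvr : ∀ y, μ (μinv y) = y)
    (R : ℝ → ℝ) (hR : ∀ x, R x = ∫ t in Iic x, r t)
    (Q : (ℕ → ℝ) → ℕ → ℝ)
    (hQ : ∀ b i, Q b i = (if i = n then 1 else R (b (i + 1))) - (if i = 0 then 0 else R (b i)))
    (M : (ℕ → ℝ) → ℕ → ℝ)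
    (hM : ∀ b i, M b i =
      (if i = n then ∫ t, t * r t else ∫ t in Iic (b (i + 1)), t * r t) -
      (if i = 0 then 0 else ∫ t in Iic (b i), t * r t))
    (TH : (ℕ → ℝ) → ℕ → ℝ) (hTH : ∀ b i, TH b i = μinv (M b i / Q b i))
    (a : ℕ → ℝ) (ha : ∀ i j, 1 ≤ i → i < j → j ≤ n → a i < a j)
    (G : (ℕ → ℝ) → ℕ → ℝ)
    (hG : ∀ b j, G b j =
      (Real.log (Q b j) + b j * TH b j - ψ (TH b j)) -
      (Real.log (Q b (j - 1)) + b j * TH b (j - 1) - ψ (TH b (j - 1))))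
    (j : ℕ) (hj1 : 1 ≤ j) (hj2 : j ≤ n) :
    HasDerivAt (fun t => G (Function.update a j t) j)
      (TH a j - TH a (j - 1) -
        r (a j) / Q a j * (1 + (a j - μ (TH a j)) ^ 2 / dμ (TH a j)) -
        r (a j) / Q a (j - 1) * (1 + (a j - μ (TH a (j - 1))) ^ 2 / dμ (TH a (j - 1))))
      (a j) := by
  have hQc : ∀ b i, Q b i = cellIntegral n 1 R b i := hQ
  have hMc : ∀ b i, M b i = cellIntegral n (∫ t, t * r t) (fun x => ∫ t in Iic x, t * r t) b i := hM
  have hRfun : R = fun x => ∫ t in Iic x, r t := funext hR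
  have hRd : HasDerivAt R (r (a j)) (a j) := hRfun ▸ hasDerivAt_setIntegral_Iic hr hint _
  have hSd : HasDerivAt (fun x => ∫ t in Iic x, t * r t) (a j * r (a j)) (a j) :=
    hasDerivAt_setIntegral_Iic (continuous_id.mul hr) hint1 _
  have hQpos : ∀ i ≤ n, Q a i ≠ 0 := fun i hi => by
    rw [hQc, hRfun, ← hnorm]
    exact (cellIntegral_setIntegral_Iic_pos hr hrpos hint ha hi).ne'
  have hcell {i : ℕ} {q' : ℝ} (hi : i ≤ n)
      (hq : HasDerivAt (fun t => Q (Function.update a j t) i) q' (a j))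
      (hm : HasDerivAt (fun t => M (Function.update a j t) i) (a j * q') (a j)) :=
    hasDerivAt_log_add_mul_sub_comp_meanInv hψ (hasDerivAt_of_rightInverse_of_deriv_pos hμ hdμpos
      hinvr) hinvr hq hm (by simpa using hQpos i hi)
  have hj0 : j ≠ 0 := by omega
  have hjn : j - 1 ≠ n := by omega
  have hQr := hasDerivAt_cellIntegral_update_self (total := 1) (n := n) hRd hj0
  have hMr := hasDerivAt_cellIntegral_update_self (total := ∫ t, t * r t) (n := n) hSd hj0
  have hQl := hasDerivAt_cellIntegral_pred_update (total := 1) hRd hj0 hjn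
  have hMl := hasDerivAt_cellIntegral_pred_update (total := ∫ t, t * r t) hSd hj0 hjn
  simp only [← hQc, ← hMc, ← mul_neg] at hQr hMr hQl hMl
  have hcells := (hcell hj2 hQr hMr).sub (hcell (by omega) hQl hMl)
  simp only [Function.update_eq_self, ← hTH] at hcells
  refine (hcells.congr_deriv ?_).congr_of_eventuallyEq (.of_forall fun t => ?_)
  · rw [neg_div]
    ring
  · simp only [hG, Function.update_self, Pi.sub_apply]

/-- Lemma 2, diagonal entries of the Jacobian of `G`:
`∂G_j/∂a_j = θ̂_j - θ̂_{j-1} - (r(a_j)/q_j)(1 + (a_j - μ(θ̂_j))²/μ'(θ̂_j))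
  - (r(a_j)/q_{j-1})(1 + (a_j - μ(θ̂_{j-1}))²/μ'(θ̂_{j-1}))`. -/
theorem smml_G_jacobian_diagonal
    (n : ℕ) (hn : 1 ≤ n)
    (r : ℝ → ℝ) (hr : Continuous r) (hrpos : ∀ x, 0 < r x)
    (hint : Integrable r) (hnorm : ∫ x, r x = 1)
    (hint1 : Integrable (fun x => x * r x))
    (ψ μ dμ : ℝ → ℝ) (hψ : ∀ θ, HasDerivAt ψ (μ θ) θ)
    (hμ : ∀ θ, HasDerivAt μ (dμ θ) θ) (hdμcont : Continuous dμ) (hdμpos : ∀ θ, 0 < dμ θ)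
    (μinv : ℝ → ℝ) (hinvl : ∀ θ, μinv (μ θ) = θ) (hinvr : ∀ y, μ (μinv y) = y)
    (h : ℝ → ℝ) (hh : ∀ x, 0 < h x) (hhcont : Continuous h)
    (hinth : Integrable (fun x => r x * Real.log (h x)))
    (F : ℝ → ℝ → ℝ) (hF : ∀ x θ, F x θ = Real.exp (x * θ - ψ θ) * h x)
    (C : ℝ) (hC : C = -∫ x, r x * Real.log (h x))
    (R : ℝ → ℝ) (hR : ∀ x, R x = ∫ t in Iic x, r t)
    (Q : (ℕ → ℝ) → ℕ → ℝ)
    (hQ : ∀ b i, Q b i = (if i = n then 1 else R (b (i + 1))) - (if i = 0 then 0 else R (b i)))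
    (M : (ℕ → ℝ) → ℕ → ℝ)
    (hM : ∀ b i, M b i =
      (if i = n then ∫ t, t * r t else ∫ t in Iic (b (i + 1)), t * r t) -
      (if i = 0 then 0 else ∫ t in Iic (b i), t * r t))
    (TH : (ℕ → ℝ) → ℕ → ℝ) (hTH : ∀ b i, TH b i = μinv (M b i / Q b i))
    (I1 : (ℕ → ℝ) → ℝ)
    (hI1 : ∀ b, I1 b = C - ∑ i ∈ Finset.range (n + 1),
      Q b i * (Real.log (Q b i) + TH b i * μ (TH b i) - ψ (TH b i)))
    (a : ℕ → ℝ) (ha : ∀ i j, 1 ≤ i → i < j → j ≤ n → a i < a j)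
    (G : (ℕ → ℝ) → ℕ → ℝ)
    (hG : ∀ b j, G b j =
      (Real.log (Q b j) + b j * TH b j - ψ (TH b j)) -
      (Real.log (Q b (j - 1)) + b j * TH b (j - 1) - ψ (TH b (j - 1))))
    (j : ℕ) (hj1 : 1 ≤ j) (hj2 : j ≤ n) :
    HasDerivAt (fun t => G (Function.update a j t) j)
      (TH a j - TH a (j - 1) -
        r (a j) / Q a j * (1 + (a j - μ (TH a j)) ^ 2 / dμ (TH a j)) -
        r (a j) / Q a (j - 1) * (1 + (a j - μ (TH a (j - 1))) ^ 2 / dμ (TH a (j - 1))))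
      (a j) :=
  smml_G_jacobian_diagonal_general n r hr hrpos hint hnorm hint1 ψ μ dμ hψ hμ hdμpos μinv hinvr R hR
    Q hQ M hM TH hTH a ha G hG j hj1 hj2
end

section
/- If for each n an SMML estimator with n cut-points exists (i.e. I₁: A_n → ℝ attains a global minimum at some a^(n)), then the sequence n ↦ I₁(a^(n)) is non-increasing. -/
/-!
Take an optimal configuration `a` of `m` cut-points and insert a new cut-point `t` just to the
right of `a m`. The new cell `(a m, t]` has mass `q → 0` and its conditional mean stays in
`[a m, t]`, so its term `q (log q + h (mean))` tends to `0` (as `q log q` does); the shortened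
last cell keeps positive mass, so its term depends continuously on `t`. Hence `I₁` at the new
configuration tends to `I₁ a`, and the minimum over `A (m + 1)` is at most `I₁ a`.
-/

open MeasureTheory Set
open Filter Topology Function

/-- The increment of `F` over the `i`-th of the `m + 1` cells `(b i, b (i + 1)]` cut out by
`b 1 < ⋯ < b m`, with the conventions `F (b 0) = 0` and `F (b (m + 1)) = S`. -/
def cellIncrement (F : ℝ → ℝ) (S : ℝ) (m : ℕ) (b : ℕ → ℝ) (i : ℕ) : ℝ :=
  (if i = m then S else F (b (i + 1))) - (if i = 0 then 0 else F (b i))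

def cellSum (φ : ℝ → ℝ → ℝ) (F G : ℝ → ℝ) (S T : ℝ) (m : ℕ) (b : ℕ → ℝ) : ℝ :=
  ∑ i ∈ Finset.range (m + 1), φ (cellIncrement F S m b i) (cellIncrement G T m b i)

section cells

variable {F : ℝ → ℝ} {S : ℝ} {m : ℕ} {b : ℕ → ℝ} {t : ℝ}

lemma cellIncrement_update_of_lt {i : ℕ} (hi : i < m) :
    cellIncrement F S (m + 1) (update b (m + 1) t) i = cellIncrement F S m b i := by
  simp only [cellIncrement, update_of_ne (show i + 1 ≠ m + 1 by omega),
    update_of_ne (show i ≠ m + 1 by omega), if_neg (show i ≠ m + 1 by omega),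
    if_neg hi.ne]

lemma cellIncrement_update_self (hm : m ≠ 0) :
    cellIncrement F S (m + 1) (update b (m + 1) t) m = F t - F (b m) := by
  simp [cellIncrement, hm]

lemma cellIncrement_update_succ :
    cellIncrement F S (m + 1) (update b (m + 1) t) (m + 1) = S - F t := by
  simp [cellIncrement]

lemma cellIncrement_self (hm : m ≠ 0) : cellIncrement F S m b m = S - F (b m) := by
  simp [cellIncrement, hm]

variable {φ : ℝ → ℝ → ℝ} {G : ℝ → ℝ} {T : ℝ}

lemma cellSum_update (hm : m ≠ 0) :
    cellSum φ F G S T (m + 1) (update b (m + 1) t) + φ (S - F (b m)) (T - G (b m)) =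
      cellSum φ F G S T m b + φ (F t - F (b m)) (G t - G (b m)) + φ (S - F t) (T - G t) := by
  have hlow : ∀ i ∈ Finset.range m,
      φ (cellIncrement F S (m + 1) (update b (m + 1) t) i)
        (cellIncrement G T (m + 1) (update b (m + 1) t) i) =
      φ (cellIncrement F S m b i) (cellIncrement G T m b i) := fun i hi => by
    rw [cellIncrement_update_of_lt (Finset.mem_range.mp hi),
      cellIncrement_update_of_lt (Finset.mem_range.mp hi)]
  simp only [cellSum, Finset.sum_range_succ _ (m + 1), Finset.sum_range_succ _ m,
    Finset.sum_congr rfl hlow, cellIncrement_update_self hm, cellIncrement_update_succ,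
    cellIncrement_self hm]
  ring

lemma tendsto_cellSum_update {l : Filter ℝ} (hm : m ≠ 0) (hF : Tendsto F l (𝓝 (F (b m))))
    (hG : Tendsto G l (𝓝 (G (b m))))
    (hφ : ContinuousAt (uncurry φ) (S - F (b m), T - G (b m)))
    (hnew : Tendsto (fun t => φ (F t - F (b m)) (G t - G (b m))) l (𝓝 0)) :
    Tendsto (fun t => cellSum φ F G S T (m + 1) (update b (m + 1) t)) l
      (𝓝 (cellSum φ F G S T m b)) := by
  have hlast : Tendsto (fun t => φ (S - F t) (T - G t)) l
      (𝓝 (φ (S - F (b m)) (T - G (b m)))) :=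
    hφ.tendsto.comp ((tendsto_const_nhds.sub hF).prodMk_nhds (tendsto_const_nhds.sub hG))
  have := ((tendsto_const_nhds (x := cellSum φ F G S T m b)).add hnew |>.add hlast).sub_const
    (φ (S - F (b m)) (T - G (b m)))
  rw [add_zero, add_sub_cancel_right] at this
  refine this.congr fun t => ?_
  rw [← cellSum_update hm]
  ring

end cells

/-- With `h v = θ μ θ - ψ θ` at `θ = μ⁻¹ v`, this is the term of `I₁` of a cell of mass `q` and
first moment `v`. -/
noncomputable def cellTerm (h : ℝ → ℝ) (q v : ℝ) : ℝ := q * (Real.log q + h (v / q))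

section cellTerm

variable {h : ℝ → ℝ}

lemma continuousAt_cellTerm (hh : Continuous h) {q v : ℝ} (hq : q ≠ 0) :
    ContinuousAt (uncurry (cellTerm h)) (q, v) := by
  simp only [uncurry_def, cellTerm]
  fun_prop (disch := exact hq)

lemma tendsto_cellTerm_zero {α : Type*} {l : Filter α} {q v : α → ℝ} {c : ℝ} (hh : Continuous h)
    (hq : Tendsto q l (𝓝 0)) (hmean : Tendsto (fun x => v x / q x) l (𝓝 c)) :
    Tendsto (fun x => cellTerm h (q x) (v x)) l (𝓝 0) := by
  have hlog : Tendsto (fun x => q x * Real.log (q x)) l (𝓝 0) := by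
    simpa [comp_def] using (Real.continuous_mul_log.tendsto 0).comp hq
  have hmean' : Tendsto (fun x => q x * h (v x / q x)) l (𝓝 0) := by
    simpa using hq.mul ((hh.tendsto c).comp hmean)
  simpa [cellTerm, mul_add] using hlog.add hmean'

end cellTerm

section density

variable {r : ℝ → ℝ}

lemma continuous_setIntegral_Iic (hr : Integrable r) : Continuous fun x => ∫ t in Iic x, r t := by
  have h : (fun x => ∫ t in Iic x, r t) = fun x => (∫ t in Iic 0, r t) + ∫ t in (0 : ℝ)..x, r t := by
    funext x
    rw [← intervalIntegral.integral_Iic_sub_Iic hr.integrableOn hr.integrableOn]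
    ring
  rw [h]
  exact continuous_const.add
    (intervalIntegral.continuous_primitive (fun _ _ => hr.intervalIntegrable) 0)

lemma setIntegral_Iic_lt_integral_s8 (hpos : ∀ x, 0 < r x) (hr : Integrable r) (a : ℝ) :
    ∫ t in Iic a, r t < ∫ t, r t := by
  have htail : 0 < ∫ t in Ioi a, r t := by
    rw [setIntegral_pos_iff_support_of_nonneg_ae (.of_forall fun x => (hpos x).le)
      hr.integrableOn]
    simp [support, (hpos _).ne']
  rw [← intervalIntegral.integral_Iic_add_Ioi hr.integrableOn hr.integrableOn]
  linarith

lemma tendsto_intervalIntegral_mean_nhdsGT (hpos : ∀ x, 0 < r x) {a : ℝ}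
    (hr : ∀ t, IntervalIntegrable r volume a t) :
    Tendsto (fun t => (∫ x in a..t, x * r x) / ∫ x in a..t, r x) (𝓝[>] a) (𝓝 a) := by
  have hbounds : ∀ t ∈ Ioi a,
      a ≤ (∫ x in a..t, x * r x) / (∫ x in a..t, r x) ∧
        (∫ x in a..t, x * r x) / (∫ x in a..t, r x) ≤ t := by
    intro t (hat : a < t)
    have hri : IntervalIntegrable r volume a t := hr t
    have hxri : IntervalIntegrable (fun x => x * r x) volume a t :=
      hri.continuousOn_mul continuousOn_id
    have hmass : 0 < ∫ x in a..t, r x :=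
      intervalIntegral.intervalIntegral_pos_of_pos_on hri (fun x _ => hpos x) hat
    rw [le_div_iff₀ hmass, div_le_iff₀ hmass, ← intervalIntegral.integral_const_mul,
      ← intervalIntegral.integral_const_mul]
    exact ⟨intervalIntegral.integral_mono_on hat.le (hri.const_mul a) hxri
        fun x hx => mul_le_mul_of_nonneg_right hx.1 (hpos x).le,
      intervalIntegral.integral_mono_on hat.le hxri (hri.const_mul t)
        fun x hx => mul_le_mul_of_nonneg_right hx.2 (hpos x).le⟩
  exact tendsto_of_tendsto_of_tendsto_of_le_of_le' tendsto_const_nhds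
    (tendsto_id.mono_left nhdsWithin_le_nhds)
    (eventually_mem_nhdsWithin.mono fun t ht => (hbounds t ht).1)
    (eventually_mem_nhdsWithin.mono fun t ht => (hbounds t ht).2)


lemma tendsto_cellTerm_setIntegral_Iic_nhdsGT {h : ℝ → ℝ} (hh : Continuous h)
    (hpos : ∀ x, 0 < r x) (hr : Integrable r) (hr1 : Integrable fun x => x * r x) (a : ℝ) :
    Tendsto (fun t => cellTerm h ((∫ x in Iic t, r x) - ∫ x in Iic a, r x)
      ((∫ x in Iic t, x * r x) - ∫ x in Iic a, x * r x)) (𝓝[>] a) (𝓝 0) := by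
  simp only [intervalIntegral.integral_Iic_sub_Iic hr.integrableOn hr.integrableOn,
    intervalIntegral.integral_Iic_sub_Iic hr1.integrableOn hr1.integrableOn]
  refine tendsto_cellTerm_zero hh ?_
    (tendsto_intervalIntegral_mean_nhdsGT hpos fun _ => hr.intervalIntegrable)
  have := (intervalIntegral.continuous_primitive (fun _ _ => hr.intervalIntegrable) a).tendsto a
  simpa using this.mono_left nhdsWithin_le_nhds

end density

def cutPoints (X : Set ℝ) (m : ℕ) : Set (ℕ → ℝ) :=
  {b | (∀ i, 1 ≤ i → i ≤ m → b i ∈ X) ∧ ∀ i j, 1 ≤ i → i < j → j ≤ m → b i < b j}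

section cutPoints

variable {X : Set ℝ} {m : ℕ} {b : ℕ → ℝ}

lemma update_mem_cutPoints {t : ℝ} (hb : b ∈ cutPoints X m) (htX : t ∈ X)
    (ht : b m < t) : update b (m + 1) t ∈ cutPoints X (m + 1) := by
  obtain ⟨hbX, hbmono⟩ := hb
  refine ⟨fun i hi him => ?_, fun i j hi hij hjm => ?_⟩
  · rcases eq_or_ne i (m + 1) with rfl | hne
    · rwa [update_self]
    · rw [update_of_ne hne]
      exact hbX i hi (by omega)
  · rw [update_of_ne (show i ≠ m + 1 by omega)]
    rcases eq_or_ne j (m + 1) with rfl | hne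
    · have hbi : b i ≤ b m := (eq_or_lt_of_le (show i ≤ m by omega)).elim
        (fun him => him ▸ le_rfl) fun him => (hbmono i m hi him le_rfl).le
      rw [update_self]
      exact hbi.trans_lt ht
    · rw [update_of_ne hne]
      exact hbmono i j hi hij (by omega)

lemma eventually_update_mem_cutPoints (hX : IsOpen X) (hb : b ∈ cutPoints X m) (hm : 1 ≤ m) :
    ∀ᶠ t in 𝓝[>] b m, update b (m + 1) t ∈ cutPoints X (m + 1) := by
  filter_upwards [nhdsWithin_le_nhds (hX.mem_nhds (hb.1 m hm le_rfl)), self_mem_nhdsWithin]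
    with t htX ht
  exact update_mem_cutPoints hb htX ht

end cutPoints

theorem smml_min_code_length_antitone_general
    (X : Set ℝ) (hX : IsOpen X)
    (r : ℝ → ℝ) (hrpos : ∀ x, 0 < r x)
    (hint : Integrable r) (hnorm : ∫ x, r x = 1)
    (hint1 : Integrable (fun x => x * r x))
    (ψ μ dμ : ℝ → ℝ) (hψ : ∀ θ, HasDerivAt ψ (μ θ) θ)
    (hμ : ∀ θ, HasDerivAt μ (dμ θ) θ) (hdμpos : ∀ θ, 0 < dμ θ)
    (μinv : ℝ → ℝ) (hinvr : ∀ y, μ (μinv y) = y)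
    (C : ℝ)
    (R : ℝ → ℝ) (hR : ∀ x, R x = ∫ t in Iic x, r t)
    (Q : ℕ → (ℕ → ℝ) → ℕ → ℝ)
    (hQ : ∀ m b i, Q m b i =
      (if i = m then 1 else R (b (i + 1))) - (if i = 0 then 0 else R (b i)))
    (M : ℕ → (ℕ → ℝ) → ℕ → ℝ)
    (hM : ∀ m b i, M m b i =
      (if i = m then ∫ t, t * r t else ∫ t in Iic (b (i + 1)), t * r t) -
      (if i = 0 then 0 else ∫ t in Iic (b i), t * r t))
    (TH : ℕ → (ℕ → ℝ) → ℕ → ℝ) (hTH : ∀ m b i, TH m b i = μinv (M m b i / Q m b i))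
    (I1 : ℕ → (ℕ → ℝ) → ℝ)
    (hI1 : ∀ m b, I1 m b = C - ∑ i ∈ Finset.range (m + 1),
      Q m b i * (Real.log (Q m b i) + TH m b i * μ (TH m b i) - ψ (TH m b i)))
    (A : ℕ → Set (ℕ → ℝ))
    (hA : ∀ m, A m = {b | (∀ i, 1 ≤ i → i ≤ m → b i ∈ X) ∧
      ∀ i j, 1 ≤ i → i < j → j ≤ m → b i < b j})
    (amin : ℕ → (ℕ → ℝ))
    (hmem : ∀ m, 1 ≤ m → amin m ∈ A m)
    (hmin : ∀ m, 1 ≤ m → ∀ b ∈ A m, I1 m (amin m) ≤ I1 m b) :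
    ∀ m k, 1 ≤ m → m ≤ k → I1 k (amin k) ≤ I1 m (amin m) := by
  have hμinv : Continuous μinv :=
    ((strictMono_of_hasDerivAt_pos hμ hdμpos).orderIsoOfRightInverse μ μinv hinvr).symm.continuous
  have hμc : Continuous μ := continuous_iff_continuousAt.2 fun θ => (hμ θ).continuousAt
  have hψc : Continuous ψ := continuous_iff_continuousAt.2 fun θ => (hψ θ).continuousAt
  set h : ℝ → ℝ := fun v => μinv v * μ (μinv v) - ψ (μinv v) with h_def
  have hh : Continuous h := by fun_prop
  obtain rfl : R = fun x => ∫ t in Iic x, r t := funext hR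
  have hI : ∀ m b, I1 m b = C - cellSum (cellTerm h) (fun x => ∫ t in Iic x, r t)
      (fun x => ∫ t in Iic x, t * r t) 1 (∫ t, t * r t) m b := by
    intro m b
    simp only [hI1, cellSum, cellTerm, cellIncrement, ← hQ, ← hM, hTH, h_def]
    ring_nf
  have step : ∀ m ≥ 1, I1 (m + 1) (amin (m + 1)) ≤ I1 m (amin m) := by
    intro m hm
    have hb : amin m ∈ cutPoints X m := by
      rw [cutPoints, ← hA]
      exact hmem m hm
    have hlast : (1 : ℝ) - ∫ t in Iic (amin m m), r t ≠ 0 :=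
      (sub_pos.2 (hnorm ▸ setIntegral_Iic_lt_integral_s8 hrpos hint _)).ne'
    have hlim : Tendsto (fun t => I1 (m + 1) (update (amin m) (m + 1) t)) (𝓝[>] (amin m m))
        (𝓝 (I1 m (amin m))) := by
      simp only [hI]
      exact (tendsto_cellSum_update (by omega)
        ((continuous_setIntegral_Iic hint).continuousWithinAt)
        ((continuous_setIntegral_Iic hint1).continuousWithinAt)
        (continuousAt_cellTerm hh hlast)
        (tendsto_cellTerm_setIntegral_Iic_nhdsGT hh hrpos hint hint1 _)).const_sub C
    refine ge_of_tendsto hlim ((eventually_update_mem_cutPoints hX hb hm).mono fun t ht => ?_)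
    rw [cutPoints, ← hA] at ht
    exact hmin (m + 1) (by omega) _ ht
  intro m k hm hmk
  exact antitoneOn_nat_Ici_of_succ_le (f := fun n => I1 n (amin n)) step hm (hm.trans hmk) hmk

/-- If for each `n ≥ 1` an SMML estimator with `n` cut-points exists, i.e. `I₁ : A_n → ℝ`
attains a global minimum at some `a⁽ⁿ⁾`, then `n ↦ I₁(a⁽ⁿ⁾)` is non-increasing. -/
theorem smml_min_code_length_antitone
    (X : Set ℝ) (hX : IsOpen X)
    (r : ℝ → ℝ) (hr : Continuous r) (hrpos : ∀ x, 0 < r x)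
    (hint : Integrable r) (hnorm : ∫ x, r x = 1)
    (hint1 : Integrable (fun x => x * r x))
    (ψ μ dμ : ℝ → ℝ) (hψ : ∀ θ, HasDerivAt ψ (μ θ) θ)
    (hμ : ∀ θ, HasDerivAt μ (dμ θ) θ) (hdμcont : Continuous dμ) (hdμpos : ∀ θ, 0 < dμ θ)
    (μinv : ℝ → ℝ) (hinvl : ∀ θ, μinv (μ θ) = θ) (hinvr : ∀ y, μ (μinv y) = y)
    (C : ℝ)
    (R : ℝ → ℝ) (hR : ∀ x, R x = ∫ t in Iic x, r t)
    (Q : ℕ → (ℕ → ℝ) → ℕ → ℝ)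
    (hQ : ∀ m b i, Q m b i =
      (if i = m then 1 else R (b (i + 1))) - (if i = 0 then 0 else R (b i)))
    (M : ℕ → (ℕ → ℝ) → ℕ → ℝ)
    (hM : ∀ m b i, M m b i =
      (if i = m then ∫ t, t * r t else ∫ t in Iic (b (i + 1)), t * r t) -
      (if i = 0 then 0 else ∫ t in Iic (b i), t * r t))
    (TH : ℕ → (ℕ → ℝ) → ℕ → ℝ) (hTH : ∀ m b i, TH m b i = μinv (M m b i / Q m b i))
    (I1 : ℕ → (ℕ → ℝ) → ℝ)
    (hI1 : ∀ m b, I1 m b = C - ∑ i ∈ Finset.range (m + 1),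
      Q m b i * (Real.log (Q m b i) + TH m b i * μ (TH m b i) - ψ (TH m b i)))
    (A : ℕ → Set (ℕ → ℝ))
    (hA : ∀ m, A m = {b | (∀ i, 1 ≤ i → i ≤ m → b i ∈ X) ∧
      ∀ i j, 1 ≤ i → i < j → j ≤ m → b i < b j})
    (amin : ℕ → (ℕ → ℝ))
    (hmem : ∀ m, 1 ≤ m → amin m ∈ A m)
    (hmin : ∀ m, 1 ≤ m → ∀ b ∈ A m, I1 m (amin m) ≤ I1 m b) :
    ∀ m k, 1 ≤ m → m ≤ k → I1 k (amin k) ≤ I1 m (amin m) :=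
  smml_min_code_length_antitone_general X hX r hrpos hint hnorm hint1 ψ μ dμ hψ hμ hdμpos μinv hinvr
    C R hR Q hQ M hM TH hTH I1 hI1 A hA amin hmem hmin
end
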